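/- Let U = {X_0, …, X_{L−1}} be a uniformly distributed (N,M,L)-FHS set over F with N ≥ 2 and L ≥ 2 (so that M divides NL and N_U(a) = NL/M for every a ∈ F). Then U has optimal average Hamming correlation, i.e., A_a(U)/(N(L−1)) + A_c(U)/(N−1) = (NL−M)/(M(N−1)(L−1)). -/

import Mathlib

open Finset

/-- Periodic Hamming correlation of two FHSs `X, Y : ZMod N → F` at shift `τ`. -/
def Hcorr {N : ℕ} [NeZero N] {F : Type*} [DecidableEq F]
    (X Y : ZMod N → F) (τ : ZMod N) : ℕ :=
  (Finset.univ.filter (fun t => X t = Y (t + τ))).card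

/-- `N_X(a)`: number of occurrences of frequency `a` in the FHS `X`. -/
def countFreq {N : ℕ} [NeZero N] {F : Type*} [DecidableEq F]
    (X : ZMod N → F) (a : F) : ℕ :=
  (Finset.univ.filter (fun t => X t = a)).card

/-- `N_U(a)`: total number of occurrences of `a` in the FHS set `U`. -/
def countFreqSet {N L : ℕ} [NeZero N] {F : Type*} [DecidableEq F]
    (U : Fin L → ZMod N → F) (a : F) : ℕ :=
  ∑ i : Fin L, countFreq (U i) a

/-- `S_a(U)`: sum of all out-of-phase Hamming autocorrelation values. -/
def Sa {N L : ℕ} [NeZero N] {F : Type*} [DecidableEq F]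
    (U : Fin L → ZMod N → F) : ℕ :=
  ∑ i : Fin L, ∑ τ ∈ Finset.univ \ {(0 : ZMod N)}, Hcorr (U i) (U i) τ

/-- `S_c(U)`: sum of all Hamming crosscorrelation values (ordered pairs `i ≠ j`). -/
def Sc {N L : ℕ} [NeZero N] {F : Type*} [DecidableEq F]
    (U : Fin L → ZMod N → F) : ℕ :=
  ∑ i : Fin L, ∑ j ∈ Finset.univ \ {i}, ∑ τ : ZMod N, Hcorr (U i) (U j) τ

/-- Average Hamming autocorrelation `A_a(U) = S_a(U)/(L(N-1))`. -/
def Aa {N L : ℕ} [NeZero N] {F : Type*} [DecidableEq F]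
    (U : Fin L → ZMod N → F) : ℚ :=
  (Sa U : ℚ) / ((L : ℚ) * ((N : ℚ) - 1))

/-- Average Hamming crosscorrelation `A_c(U) = S_c(U)/(L(L-1)N)`. -/
def Ac {N L : ℕ} [NeZero N] {F : Type*} [DecidableEq F]
    (U : Fin L → ZMod N → F) : ℚ :=
  (Sc U : ℚ) / ((L : ℚ) * ((L : ℚ) - 1) * (N : ℚ))

/-- `H_a(U)`: maximum out-of-phase Hamming autocorrelation of the set `U`. -/
def Ha {N L : ℕ} [NeZero N] {F : Type*} [DecidableEq F]
    (U : Fin L → ZMod N → F) : ℕ :=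
  Finset.univ.sup fun i => (Finset.univ \ {(0 : ZMod N)}).sup fun τ => Hcorr (U i) (U i) τ

/-- `H_c(U)`: maximum Hamming crosscorrelation of the set `U`. -/
def Hc {N L : ℕ} [NeZero N] {F : Type*} [DecidableEq F]
    (U : Fin L → ZMod N → F) : ℕ :=
  Finset.univ.sup fun i => (Finset.univ \ {i}).sup fun j =>
    Finset.univ.sup fun τ => Hcorr (U i) (U j) τ

/-- `U` has optimal average Hamming correlation (meets the Peng et al. AHC bound with equality). -/
def optimalAHC {N L : ℕ} [NeZero N] {F : Type*} [Fintype F] [DecidableEq F]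
    (U : Fin L → ZMod N → F) : Prop :=
  Aa U / ((N : ℚ) * ((L : ℚ) - 1)) + Ac U / ((N : ℚ) - 1)
    = ((N : ℚ) * L - Fintype.card F) /
      ((Fintype.card F : ℚ) * ((N : ℚ) - 1) * ((L : ℚ) - 1))

/-- The cyclotomic class `C_r = {α^(Ml+r) : 0 ≤ l ≤ f-1}`. -/
def cycClass {F : Type*} [Monoid F] [DecidableEq F] (α : F) (M f r : ℕ) : Finset F :=
  (Finset.range f).image fun l => α ^ (M * l + r)

/-- The cyclotomic number `(i,j)_M = |(C_i + 1) ∩ C_j|`. -/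
def cycNum {F : Type*} [Field F] [DecidableEq F] (α : F) (M f i j : ℕ) : ℕ :=
  (((cycClass α M f i).image fun x => x + 1) ∩ cycClass α M f j).card

/-!
Summing the correlations over all shifts counts coinciding pairs of positions, so
`∑_τ H_{X,Y}(τ) = ∑_a N_X(a) N_Y(a)`. Summing over all ordered pairs `(i, j)` gives
`S_a(U) + S_c(U) + NL = ∑_a N_U(a)²`, the term `NL` coming from the in-phase autocorrelations
`H_{X_i}(0) = N`. For a uniform distribution `∑_a N_U(a)² = (NL)²/M`, and the defining
identity of optimal AHC is this equation divided by `NL(N-1)(L-1)`.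
-/

theorem Fintype.card_smul_sum_sq_of_forall_eq {ι R : Type*} [Fintype ι] [CommSemiring R]
    (f : ι → R) (hf : ∀ a b, f a = f b) :
    Fintype.card ι • ∑ a, f a ^ 2 = (∑ a, f a) ^ 2 := by
  rcases isEmpty_or_nonempty ι with hι | ⟨⟨a₀⟩⟩
  · simp
  · have hconst : f = fun _ => f a₀ := funext (hf · a₀)
    rw [hconst]
    simp only [sum_const, card_univ, nsmul_eq_mul]
    ring

section HammingCorrelation

variable {N : ℕ} [NeZero N] {F : Type*} [DecidableEq F]

theorem Hcorr_self_zero (X : ZMod N → F) : Hcorr X X 0 = N := by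
  simp [Hcorr, ZMod.card]

theorem sum_countFreq [Fintype F] (X : ZMod N → F) : ∑ a, countFreq X a = N := by
  simpa [countFreq, ZMod.card] using
    (card_eq_sum_card_fiberwise (f := X) (s := univ) (t := univ) fun _ _ => mem_univ _).symm

theorem sum_Hcorr_eq_sum_countFreq_mul [Fintype F] (X Y : ZMod N → F) :
    ∑ τ, Hcorr X Y τ = ∑ a, countFreq X a * countFreq Y a := by
  have hshift : ∑ τ, Hcorr X Y τ = ∑ t, countFreq Y (X t) := by
    simp only [Hcorr, countFreq, card_filter]
    rw [sum_comm]
    refine sum_congr rfl fun t _ => ?_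
    rw [Fintype.sum_equiv (Equiv.addLeft t) (fun τ => if X t = Y (t + τ) then 1 else 0)
      (fun s => if X t = Y s then 1 else 0) fun _ => rfl]
    simp [eq_comm]
  rw [hshift, ← sum_fiberwise univ X]
  refine sum_congr rfl fun a _ => ?_
  rw [sum_congr rfl fun t ht => by rw [(mem_filter.mp ht).2], sum_const, smul_eq_mul]
  rfl

variable {L : ℕ} (U : Fin L → ZMod N → F)

theorem sum_countFreqSet [Fintype F] : ∑ a, countFreqSet U a = N * L := by
  simp [countFreqSet, sum_comm (γ := F), sum_countFreq, mul_comm]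

theorem Sa_add_mul_eq_sum_sum_Hcorr_self :
    Sa U + N * L = ∑ i, ∑ τ, Hcorr (U i) (U i) τ := by
  rw [Sa, show N * L = ∑ _i : Fin L, N by simp [mul_comm], ← sum_add_distrib]
  refine sum_congr rfl fun i _ => ?_
  rw [← sum_sdiff (f := fun τ => Hcorr (U i) (U i) τ) (subset_univ {0}), sum_singleton,
    Hcorr_self_zero]

theorem Sc_add_sum_sum_Hcorr_self :
    Sc U + ∑ i, ∑ τ, Hcorr (U i) (U i) τ = ∑ i, ∑ j, ∑ τ, Hcorr (U i) (U j) τ := by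
  rw [Sc, ← sum_add_distrib]
  refine sum_congr rfl fun i _ => ?_
  rw [← sum_singleton (fun j => ∑ τ, Hcorr (U i) (U j) τ) i, sum_sdiff (subset_univ _)]

theorem sum_sum_sum_Hcorr_eq_sum_countFreqSet_sq [Fintype F] :
    ∑ i, ∑ j, ∑ τ, Hcorr (U i) (U j) τ = ∑ a, countFreqSet U a ^ 2 := by
  simp only [sum_Hcorr_eq_sum_countFreq_mul, countFreqSet, sq, sum_mul_sum]
  exact (sum_congr rfl fun _ _ => sum_comm).trans sum_comm

theorem Sa_add_Sc_add_mul_eq_sum_countFreqSet_sq [Fintype F] :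
    Sa U + Sc U + N * L = ∑ a, countFreqSet U a ^ 2 := by
  rw [← sum_sum_sum_Hcorr_eq_sum_countFreqSet_sq U, ← Sc_add_sum_sum_Hcorr_self U,
    ← Sa_add_mul_eq_sum_sum_Hcorr_self U]
  ring

theorem card_mul_Sa_add_Sc_add_mul_of_uniform [Fintype F]
    (hud : ∀ a b, countFreqSet U a = countFreqSet U b) :
    Fintype.card F * (Sa U + Sc U + N * L) = (N * L) ^ 2 := by
  rw [Sa_add_Sc_add_mul_eq_sum_countFreqSet_sq, ← smul_eq_mul,
    Fintype.card_smul_sum_sq_of_forall_eq _ hud, sum_countFreqSet]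

theorem Aa_div_add_Ac_div :
    Aa U / ((N : ℚ) * ((L : ℚ) - 1)) + Ac U / ((N : ℚ) - 1)
      = ((Sa U : ℚ) + Sc U) / ((N : ℚ) * L * ((N : ℚ) - 1) * ((L : ℚ) - 1)) := by
  rw [Aa, Ac, div_div, div_div, add_div]
  congr 2 <;> ring

end HammingCorrelation

theorem uniformly_distributed_optimal_AHC_general {N M L : ℕ} [NeZero N] (hL : 2 ≤ L)
    {F : Type*} [Fintype F] [DecidableEq F] (hM : Fintype.card F = M)
    (U : Fin L → ZMod N → F)
    (hud : ∀ a b : F, countFreqSet U a = countFreqSet U b) :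
    Aa U / ((N : ℚ) * ((L : ℚ) - 1)) + Ac U / ((N : ℚ) - 1)
      = ((N : ℚ) * (L : ℚ) - (M : ℚ)) / ((M : ℚ) * ((N : ℚ) - 1) * ((L : ℚ) - 1)) := by
  have hM₀ : (M : ℚ) ≠ 0 := by
    rw [← hM, Nat.cast_ne_zero, ← Nat.pos_iff_ne_zero, Fintype.card_pos_iff]
    exact ⟨U ⟨0, by omega⟩ 0⟩
  have hNL : (N : ℚ) * L ≠ 0 := by
    have : L ≠ 0 := by omega
    simp [NeZero.ne N, this]
  have hcount : (M : ℚ) * (Sa U + Sc U + N * L) = (N * L) ^ 2 := by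
    exact_mod_cast hM ▸ card_mul_Sa_add_Sc_add_mul_of_uniform U hud
  have hsum : (Sa U : ℚ) + Sc U = ((N : ℚ) * L - M) * (N * L) / M :=
    eq_div_of_mul_eq hM₀ (by linear_combination hcount)
  rw [Aa_div_add_Ac_div, hsum, div_div,
    show (M : ℚ) * (N * L * (N - 1) * (L - 1)) = M * (N - 1) * (L - 1) * (N * L) by ring,
    mul_div_mul_right _ _ hNL]

/-- Theorem 6, a uniformly distributed FHS set has optimal AHC. -/
theorem uniformly_distributed_optimal_AHC {N M L : ℕ} [NeZero N] (hN : 2 ≤ N) (hL : 2 ≤ L)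
    {F : Type*} [Fintype F] [DecidableEq F] (hM : Fintype.card F = M)
    (U : Fin L → ZMod N → F)
    (hud : ∀ a b : F, countFreqSet U a = countFreqSet U b) :
    Aa U / ((N : ℚ) * ((L : ℚ) - 1)) + Ac U / ((N : ℚ) - 1)
      = ((N : ℚ) * (L : ℚ) - (M : ℚ)) / ((M : ℚ) * ((N : ℚ) - 1) * ((L : ℚ) - 1)) :=
  uniformly_distributed_optimal_AHC_general hL hM U hud
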